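/- arXiv:1702.07150 — 2 statements merged into one kernel-verified Lean document; each statement's English description precedes it below -/
import Mathlib

section
/- Let T̲₁, T̲₂, S̲₁, S̲₂ be lower transition operators on a finite state space and f ∈ ℒ(𝒳). Then ‖T̲₁T̲₂f − S̲₁S̲₂f‖ ≤ ‖T̲₂f − S̲₂f‖ + ‖T̲₁ − S̲₁‖·‖S̲₂f‖_c, where ‖g‖_c := (max g − min g)/2 and ‖T̲₁ − S̲₁‖ := sup{‖(T̲₁ − S̲₁)g‖ : ‖g‖ = 1}. -/
open scoped BigOperators

variable {X : Type*} [Fintype X] [Nonempty X] [DecidableEq X]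

/-- The maximum norm on real-valued functions on a finite state space. -/
noncomputable def maxNorm (f : X → ℝ) : ℝ := ⨆ x, |f x|

/-- The variation seminorm `max f - min f`. -/
noncomputable def varNorm (f : X → ℝ) : ℝ := (⨆ x, f x) - (⨅ x, f x)

/-- The centred seminorm `(max f - min f)/2`. -/
noncomputable def centNorm (f : X → ℝ) : ℝ := ((⨆ x, f x) - (⨅ x, f x)) / 2

/-- Indicator function of the singleton `{x}`. -/
def indic (x : X) : X → ℝ := fun y => if y = x then 1 else 0

/-- A lower transition operator: dominates the minimum, is superadditive,
and is non-negatively homogeneous. -/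
def IsLTO (T : (X → ℝ) → (X → ℝ)) : Prop :=
  (∀ f x, (⨅ y, f y) ≤ T f x) ∧
  (∀ f g x, T f x + T g x ≤ T (f + g) x) ∧
  (∀ (μ : ℝ), 0 ≤ μ → ∀ f, T (μ • f) = μ • T f)

/-- A lower transition rate operator: vanishes on constants, is superadditive,
is non-negatively homogeneous, and is non-negative off the diagonal on indicators. -/
def IsLTRO (Q : (X → ℝ) → (X → ℝ)) : Prop :=
  (∀ γ : ℝ, Q (fun _ => γ) = 0) ∧
  (∀ f g x, Q f x + Q g x ≤ Q (f + g) x) ∧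
  (∀ (μ : ℝ), 0 ≤ μ → ∀ f, Q (μ • f) = μ • Q f) ∧
  (∀ x y, x ≠ y → 0 ≤ Q (indic x) y)

/-- Operator norm induced by the maximum norm. -/
noncomputable def opNorm (A : (X → ℝ) → (X → ℝ)) : ℝ :=
  sSup {r | ∃ f : X → ℝ, maxNorm f = 1 ∧ r = maxNorm (A f)}

/-- The (weak) coefficient of ergodicity. -/
noncomputable def coeffErg (A : (X → ℝ) → (X → ℝ)) : ℝ :=
  sSup {r | ∃ f : X → ℝ, (∀ x, 0 ≤ f x ∧ f x ≤ 1) ∧ r = varNorm (A f)}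

section Helpers

lemma le_maxNorm' (f : X → ℝ) (x : X) : |f x| ≤ maxNorm f := by
  unfold maxNorm
  exact le_ciSup (Set.Finite.bddAbove (Set.finite_range fun y => |f y|)) x

lemma maxNorm_le' {f : X → ℝ} {c : ℝ} (h : ∀ x, |f x| ≤ c) : maxNorm f ≤ c :=
  ciSup_le h

lemma maxNorm_nonneg' (f : X → ℝ) : 0 ≤ maxNorm f :=
  le_trans (abs_nonneg _) (le_maxNorm' f (Classical.arbitrary X))

lemma iInf_le'' (f : X → ℝ) (x : X) : (⨅ y, f y) ≤ f x :=
  ciInf_le (Set.Finite.bddBelow (Set.finite_range _)) x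

lemma le_iSup'' (f : X → ℝ) (x : X) : f x ≤ ⨆ y, f y :=
  le_ciSup (Set.Finite.bddAbove (Set.finite_range _)) x

lemma neg_maxNorm_le_iInf (f : X → ℝ) : -maxNorm f ≤ ⨅ y, f y :=
  le_ciInf fun y => by
    have := le_maxNorm' f y
    have := abs_le.mp (le_trans (le_refl _) this)
    linarith [this.1]

lemma iSup_le_maxNorm (f : X → ℝ) : (⨆ y, f y) ≤ maxNorm f :=
  ciSup_le fun y => le_trans (le_abs_self _) (le_maxNorm' f y)

lemma lto_zero {T : (X → ℝ) → (X → ℝ)} (hT : IsLTO T) : T 0 = 0 := by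
  have h := hT.2.2 0 le_rfl 0
  simpa using h

lemma lto_le_sup {T : (X → ℝ) → (X → ℝ)} (hT : IsLTO T) (f : X → ℝ) (x : X) :
    T f x ≤ ⨆ y, f y := by
  have h1 := hT.2.1 f (-f) x
  have hfe : f + -f = (0 : X → ℝ) := by funext y; simp
  rw [hfe, lto_zero hT] at h1
  have h2 : -(⨆ y, f y) ≤ T (-f) x := by
    refine le_trans (le_ciInf fun y => ?_) (hT.1 (-f) x)
    simpa using le_iSup'' f y
  simp only [Pi.zero_apply] at h1
  linarith

lemma lto_norm_le {T : (X → ℝ) → (X → ℝ)} (hT : IsLTO T) (f : X → ℝ) (x : X) :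
    |T f x| ≤ maxNorm f := by
  refine abs_le.mpr ⟨?_, le_trans (lto_le_sup hT f x) (iSup_le_maxNorm f)⟩
  exact le_trans (neg_maxNorm_le_iInf f) (hT.1 f x)

lemma lto_lipschitz {T : (X → ℝ) → (X → ℝ)} (hT : IsLTO T) (a b : X → ℝ) (x : X) :
    |T a x - T b x| ≤ maxNorm (a - b) := by
  have key : ∀ u v : X → ℝ, T v x - maxNorm (u - v) ≤ T u x := by
    intro u v
    have h1 := hT.2.1 v (u - v) x
    have : v + (u - v) = u := by funext y; simp
    rw [this] at h1
    have h2 : -maxNorm (u - v) ≤ T (u - v) x :=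
      le_trans (neg_maxNorm_le_iInf _) (hT.1 _ x)
    linarith
  have h1 := key a b
  have h2 := key b a
  have hsymm : maxNorm (b - a) = maxNorm (a - b) := by
    unfold maxNorm
    congr 1; funext y; simp [abs_sub_comm]
  rw [hsymm] at h2
  exact abs_le.mpr ⟨by linarith, by linarith⟩

lemma lto_shift {T : (X → ℝ) → (X → ℝ)} (hT : IsLTO T) (f : X → ℝ) (γ : ℝ) (x : X) :
    T (f + fun _ => γ) x = T f x + γ := by
  have hconst : ∀ c : ℝ, ∀ y : X, c ≤ T (fun _ => c) y := by
    intro c y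
    have := hT.1 (fun _ => c) y
    simpa [ciInf_const] using this
  have h1 : T f x + γ ≤ T (f + fun _ => γ) x :=
    le_trans (by linarith [hconst γ x]) (hT.2.1 f (fun _ => γ) x)
  have h2 : T (f + fun _ => γ) x - γ ≤ T f x := by
    have := hT.2.1 (f + fun _ => γ) (fun _ => -γ) x
    have he : (f + fun _ => γ) + (fun _ => -γ) = f := by funext y; simp
    rw [he] at this
    linarith [hconst (-γ) x]
  linarith

lemma maxNorm_smul' (c : ℝ) (hc : 0 ≤ c) (f : X → ℝ) :
    maxNorm (c • f) = c * maxNorm f := by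
  have hle : ∀ (d : ℝ), 0 ≤ d → ∀ g : X → ℝ, maxNorm (d • g) ≤ d * maxNorm g := by
    intro d hd g
    refine maxNorm_le' fun x => ?_
    have : |(d • g) x| = d * |g x| := by
      simp [abs_mul, abs_of_nonneg hd]
    rw [this]
    exact mul_le_mul_of_nonneg_left (le_maxNorm' g x) hd
  rcases eq_or_lt_of_le hc with h | h
  · subst h
    have : (0 : ℝ) • f = (0 : X → ℝ) := by funext y; simp
    rw [this]
    have : maxNorm (0 : X → ℝ) = 0 := le_antisymm (maxNorm_le' fun x => by simp)
      (maxNorm_nonneg' _)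
    rw [this]; ring
  · refine le_antisymm (hle c hc f) ?_
    have h2 := hle c⁻¹ (by positivity) (c • f)
    have : c⁻¹ • (c • f) = f := by
      rw [smul_smul, inv_mul_cancel₀ (ne_of_gt h), one_smul]
    rw [this] at h2
    calc c * maxNorm f ≤ c * (c⁻¹ * maxNorm (c • f)) :=
          mul_le_mul_of_nonneg_left h2 hc
      _ = maxNorm (c • f) := by field_simp

lemma opNorm_set_bddAbove {T S : (X → ℝ) → (X → ℝ)} (hT : IsLTO T) (hS : IsLTO S) :
    BddAbove {r | ∃ f : X → ℝ, maxNorm f = 1 ∧ r = maxNorm ((fun g => T g - S g) f)} := by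
  refine ⟨2, fun r hr => ?_⟩
  obtain ⟨g, hg1, rfl⟩ := hr
  refine maxNorm_le' fun x => ?_
  have h1 := lto_norm_le hT g x
  have h2 := lto_norm_le hS g x
  simp only [Pi.sub_apply]
  rw [hg1] at h1 h2
  calc |T g x - S g x| ≤ |T g x| + |S g x| := abs_sub _ _
    _ ≤ 2 := by linarith

end Helpers

theorem stmt10 (T₁ T₂ S₁ S₂ : (X → ℝ) → (X → ℝ))
    (hT₁ : IsLTO T₁) (hT₂ : IsLTO T₂) (hS₁ : IsLTO S₁) (hS₂ : IsLTO S₂)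
    (f : X → ℝ) :
    maxNorm (T₁ (T₂ f) - S₁ (S₂ f)) ≤
      maxNorm (T₂ f - S₂ f) + opNorm (fun g => T₁ g - S₁ g) * centNorm (S₂ f) := by
  classical
  set A : (X → ℝ) → (X → ℝ) := fun g => T₁ g - S₁ g with hA
  set g : X → ℝ := S₂ f with hg
  set m : ℝ := ⨆ x, g x with hm
  set n : ℝ := ⨅ x, g x with hn
  set c : ℝ := (m + n) / 2 with hc
  set gcen : X → ℝ := fun x => g x - c with hgcen
  have hmn : n ≤ m := le_trans (iInf_le'' g (Classical.arbitrary X))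
    (le_iSup'' g (Classical.arbitrary X))
  have hcent : centNorm g = (m - n) / 2 := rfl
  -- gcen is bounded by centNorm g
  have hub : maxNorm gcen ≤ centNorm g := by
    refine maxNorm_le' fun x => abs_le.mpr ⟨?_, ?_⟩
    · have := iInf_le'' g x
      rw [hcent]; simp only [hgcen]; rw [hc]; linarith [this]
    · have := le_iSup'' g x
      rw [hcent]; simp only [hgcen]; rw [hc]; linarith [this]
  -- the set defining opNorm is bounded above and nonempty
  have hbdd := opNorm_set_bddAbove (X := X) hT₁ hS₁
  have hopnn : 0 ≤ opNorm A := by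
    have hmem : maxNorm (A (fun _ => (1 : ℝ))) ∈
        {r | ∃ h : X → ℝ, maxNorm h = 1 ∧ r = maxNorm (A h)} := by
      refine ⟨fun _ => 1, ?_, rfl⟩
      have : maxNorm (fun _ : X => (1 : ℝ)) = ⨆ _ : X, |(1 : ℝ)| := rfl
      rw [this, ciSup_const, abs_one]
    exact le_trans (maxNorm_nonneg' _) (le_csSup hbdd hmem)
  -- key bound: maxNorm (A gcen) ≤ opNorm A * centNorm g
  have hAhom : ∀ (μ : ℝ), 0 ≤ μ → ∀ h, A (μ • h) = μ • A h := by
    intro μ hμ h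
    simp only [hA]
    rw [hT₁.2.2 μ hμ h, hS₁.2.2 μ hμ h]
    funext y; simp [mul_sub]
  have hkey : maxNorm (A gcen) ≤ opNorm A * centNorm g := by
    set r : ℝ := maxNorm gcen with hr
    have hrnn : 0 ≤ r := maxNorm_nonneg' _
    rcases eq_or_lt_of_le hrnn with h0 | hpos
    · -- gcen = 0
      have hgcen0 : gcen = 0 := by
        funext x
        have := le_maxNorm' gcen x
        rw [← hr, ← h0] at this
        have := abs_nonneg (gcen x)
        have habs : |gcen x| = 0 := le_antisymm (by rw [← h0] at *; linarith [le_maxNorm' gcen x]) (abs_nonneg _)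
        simpa using abs_eq_zero.mp habs
      rw [hgcen0]
      have hA0 : A 0 = 0 := by
        simp only [hA]; rw [lto_zero hT₁, lto_zero hS₁]; funext y; simp
      rw [hA0]
      have : maxNorm (0 : X → ℝ) = 0 :=
        le_antisymm (maxNorm_le' fun x => by simp) (maxNorm_nonneg' _)
      rw [this]
      have : 0 ≤ centNorm g := by rw [hcent]; linarith
      positivity
    · -- normalize
      set u : X → ℝ := r⁻¹ • gcen with hu
      have hu1 : maxNorm u = 1 := by
        rw [hu, maxNorm_smul' r⁻¹ (by positivity) gcen, ← hr,
          inv_mul_cancel₀ (ne_of_gt hpos)]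
      have hgcenu : gcen = r • u := by
        rw [hu, smul_smul, mul_inv_cancel₀ (ne_of_gt hpos), one_smul]
      have hAu : maxNorm (A u) ≤ opNorm A :=
        le_csSup hbdd ⟨u, hu1, rfl⟩
      calc maxNorm (A gcen) = maxNorm (r • A u) := by rw [hgcenu, hAhom r (le_of_lt hpos) u]
        _ = r * maxNorm (A u) := maxNorm_smul' r (le_of_lt hpos) (A u)
        _ ≤ opNorm A * centNorm g := by
            have h1 : r * maxNorm (A u) ≤ r * opNorm A :=
              mul_le_mul_of_nonneg_left hAu (le_of_lt hpos)
            have h2 : r * opNorm A ≤ centNorm g * opNorm A :=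
              mul_le_mul_of_nonneg_right hub hopnn
            linarith [h1, h2, mul_comm (centNorm g) (opNorm A)]
  -- shift invariance: A g = A gcen
  have hshift : ∀ x, A g x = A gcen x := by
    intro x
    have hge : g = gcen + fun _ => c := by funext y; simp [hgcen]
    simp only [hA, Pi.sub_apply]
    rw [hge, lto_shift hT₁ gcen c x, lto_shift hS₁ gcen c x]
    ring
  -- final chain
  have htri : maxNorm (T₁ (T₂ f) - S₁ (S₂ f)) ≤
      maxNorm (T₂ f - S₂ f) + maxNorm (A g) := by
    refine maxNorm_le' fun x => ?_
    have h1 : |T₁ (T₂ f) x - T₁ (S₂ f) x| ≤ maxNorm (T₂ f - S₂ f) :=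
      lto_lipschitz hT₁ (T₂ f) (S₂ f) x
    have h2 : |A g x| ≤ maxNorm (A g) := le_maxNorm' (A g) x
    simp only [Pi.sub_apply] at *
    have : T₁ (T₂ f) x - S₁ (S₂ f) x =
        (T₁ (T₂ f) x - T₁ (S₂ f) x) + (T₁ (S₂ f) x - S₁ (S₂ f) x) := by ring
    rw [this]
    calc |(T₁ (T₂ f) x - T₁ (S₂ f) x) + (T₁ (S₂ f) x - S₁ (S₂ f) x)| ≤
        |T₁ (T₂ f) x - T₁ (S₂ f) x| + |T₁ (S₂ f) x - S₁ (S₂ f) x| := abs_add_le _ _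
      _ ≤ maxNorm (T₂ f - S₂ f) + maxNorm (A g) := by
          have : T₁ (S₂ f) x - S₁ (S₂ f) x = A g x := rfl
          rw [this]; exact add_le_add h1 h2
  have hAg : maxNorm (A g) ≤ opNorm A * centNorm g := by
    have : A g = A gcen := funext hshift
    rw [this]; exact hkey
  calc maxNorm (T₁ (T₂ f) - S₁ (S₂ f)) ≤ maxNorm (T₂ f - S₂ f) + maxNorm (A g) := htri
    _ ≤ maxNorm (T₂ f - S₂ f) + opNorm A * centNorm g := by linarith
    _ = maxNorm (T₂ f - S₂ f) + opNorm (fun g => T₁ g - S₁ g) * centNorm (S₂ f) := rfl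
end

section
/- Let T̲ be a lower transition operator on a finite state space 𝒳. Then its coefficient of ergodicity β(T̲) := max{‖T̲f‖_v : 0 ≤ f ≤ 1} also equals max{‖T̲f‖_v : f ∈ ℒ(𝒳), max f = 1, min f = 0} and equals max{‖T̲f‖_c : f ∈ ℒ(𝒳), −1 ≤ f ≤ 1}, where ‖g‖_c = ‖g‖_v/2. -/
open scoped BigOperators

variable {X : Type*} [Fintype X] [Nonempty X] [DecidableEq X]

/-!
A lower transition operator commutes with adding constants and with non-negative scaling, so
`‖T̲(μ f + c)‖_v = μ ‖T̲ f‖_v` for `μ ≥ 0`, and `‖T̲ f‖_v ≤ ‖f‖_v` because `min f ≤ T̲ f ≤ max f`.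
The affine bijection `f ↦ 2f - 1` between `[0,1]`-valued and `[-1,1]`-valued functions doubles
the variation of `T̲ f`, which gives the centred form. A non-constant `[0,1]`-valued `f` equals
`‖f‖_v g + min f` with `max g = 1`, `min g = 0`, and `‖f‖_v ≤ 1`, so `‖T̲ f‖_v ≤ ‖T̲ g‖_v`;
constant functions only contribute `0`.
-/

theorem varNorm_le_one_of_mem_Icc {α : Type*} [Nonempty α] {f : α → ℝ}
    (hf : ∀ x, 0 ≤ f x ∧ f x ≤ 1) : varNorm f ≤ 1 := by
  have hsup : ⨆ x, f x ≤ 1 := ciSup_le fun x => (hf x).2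
  have hinf : 0 ≤ ⨅ x, f x := le_ciInf fun x => (hf x).1
  unfold varNorm
  linarith

section Variation

variable {α : Type*} [Finite α] [Nonempty α]

theorem ciSup_smul_add_const {μ : ℝ} (hμ : 0 ≤ μ) (f : α → ℝ) (c : ℝ) :
    ⨆ x, (μ • f + fun _ => c : α → ℝ) x = μ * (⨆ x, f x) + c := by
  simp only [Pi.add_apply, Pi.smul_apply, smul_eq_mul]
  rw [Real.mul_iSup_of_nonneg hμ, ciSup_add (Finite.bddAbove_range _)]

theorem ciInf_smul_add_const {μ : ℝ} (hμ : 0 ≤ μ) (f : α → ℝ) (c : ℝ) :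
    ⨅ x, (μ • f + fun _ => c : α → ℝ) x = μ * (⨅ x, f x) + c := by
  simp only [Pi.add_apply, Pi.smul_apply, smul_eq_mul]
  rw [Real.mul_iInf_of_nonneg hμ, ciInf_add (Finite.bddBelow_range _)]

theorem varNorm_nonneg (f : α → ℝ) : 0 ≤ varNorm f :=
  sub_nonneg.2 <| (ciInf_le (Finite.bddBelow_range f) (Classical.arbitrary α)).trans
    (le_ciSup (Finite.bddAbove_range f) _)

theorem varNorm_smul_add_const {μ : ℝ} (hμ : 0 ≤ μ) (f : α → ℝ) (c : ℝ) :
    varNorm (μ • f + fun _ => c) = μ * varNorm f := by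
  unfold varNorm
  rw [ciSup_smul_add_const hμ, ciInf_smul_add_const hμ]
  ring

theorem exists_normalized_of_varNorm_pos {f : α → ℝ} (hf : 0 < varNorm f) :
    ∃ g : α → ℝ, (⨆ x, g x) = 1 ∧ (⨅ x, g x) = 0 ∧
      f = varNorm f • g + fun _ => ⨅ x, f x := by
  have hinv : 0 ≤ (varNorm f)⁻¹ := inv_nonneg.2 hf.le
  refine ⟨(varNorm f)⁻¹ • f + fun _ => -((varNorm f)⁻¹ * ⨅ x, f x), ?_, ?_, ?_⟩
  · rw [ciSup_smul_add_const hinv, ← sub_eq_add_neg, ← mul_sub]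
    exact inv_mul_cancel₀ hf.ne'
  · rw [ciInf_smul_add_const hinv]
    ring
  · ext x
    simp only [Pi.add_apply, Pi.smul_apply, smul_eq_mul]
    field_simp
    ring

end Variation

namespace IsLTO

variable {α : Type*} {T : (α → ℝ) → (α → ℝ)}

theorem map_zero (hT : IsLTO T) : T 0 = 0 := by
  simpa using hT.2.2 0 le_rfl 0

theorem map_add_const [Nonempty α] (hT : IsLTO T) (f : α → ℝ) (c : ℝ) :
    T (f + fun _ => c) = T f + fun _ => c := by
  have hconst (a : ℝ) (x : α) : a ≤ T (fun _ => a) x := by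
    simpa only [ciInf_const] using hT.1 (fun _ => a) x
  ext x
  show T (f + fun _ => c) x = T f x + c
  have hup := hT.2.1 f (fun _ => c) x
  have hdown := hT.2.1 (f + fun _ => c) (fun _ => -c) x
  rw [add_assoc, show ((fun _ => c) + fun _ => -c : α → ℝ) = 0 by ext; simp, add_zero] at hdown
  linarith [hconst c x, hconst (-c) x]

theorem map_smul_add_const [Nonempty α] (hT : IsLTO T) {μ : ℝ} (hμ : 0 ≤ μ) (f : α → ℝ)
    (c : ℝ) : T (μ • f + fun _ => c) = μ • T f + fun _ => c := by
  rw [hT.map_add_const, hT.2.2 μ hμ]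

/-- The upper bound comes from the conjugate: `T f + T (-f) ≤ T 0 = 0`. -/
theorem le_ciSup [Finite α] [Nonempty α] (hT : IsLTO T) (f : α → ℝ) (x : α) :
    T f x ≤ ⨆ y, f y := by
  have hconj : T f x + T (-f) x ≤ 0 := by
    simpa [hT.map_zero] using hT.2.1 f (-f) x
  have hneg : -(⨆ y, f y) ≤ ⨅ y, (-f) y :=
    le_ciInf fun y => neg_le_neg (_root_.le_ciSup (Finite.bddAbove_range f) y)
  linarith [hT.1 (-f) x]

theorem varNorm_map_le [Finite α] [Nonempty α] (hT : IsLTO T) (f : α → ℝ) :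
    varNorm (T f) ≤ varNorm f :=
  sub_le_sub (ciSup_le (hT.le_ciSup f)) (le_ciInf (hT.1 f))

theorem varNorm_map_smul_add_const [Finite α] [Nonempty α] (hT : IsLTO T) {μ : ℝ}
    (hμ : 0 ≤ μ) (f : α → ℝ) (c : ℝ) :
    varNorm (T (μ • f + fun _ => c)) = μ * varNorm (T f) := by
  rw [hT.map_smul_add_const hμ, varNorm_smul_add_const hμ]

variable [Finite α] [Nonempty α]

theorem bddAbove_varNorm_map_Icc (hT : IsLTO T) :
    BddAbove {r | ∃ f : α → ℝ, (∀ x, 0 ≤ f x ∧ f x ≤ 1) ∧ r = varNorm (T f)} :=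
  ⟨1, by rintro r ⟨f, hf, rfl⟩; exact (hT.varNorm_map_le f).trans (varNorm_le_one_of_mem_Icc hf)⟩

/-- When `α` is a singleton no function is normalized; then both sides are `0`, the right one
because `sSup ∅ = 0`. -/
theorem coeffErg_eq_sSup_normalized (hT : IsLTO T) :
    coeffErg T =
      sSup {r | ∃ f : α → ℝ, (⨆ x, f x) = 1 ∧ (⨅ x, f x) = 0 ∧ r = varNorm (T f)} := by
  set N := {r | ∃ f : α → ℝ, (⨆ x, f x) = 1 ∧ (⨅ x, f x) = 0 ∧ r = varNorm (T f)}
  have hN : N ⊆ {r | ∃ f : α → ℝ, (∀ x, 0 ≤ f x ∧ f x ≤ 1) ∧ r = varNorm (T f)} := by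
    rintro r ⟨f, hsup, hinf, rfl⟩
    exact ⟨f, fun x => ⟨hinf ▸ ciInf_le (Finite.bddBelow_range f) x,
      hsup ▸ _root_.le_ciSup (Finite.bddAbove_range f) x⟩, rfl⟩
  have hN_nonneg : 0 ≤ sSup N := Real.sSup_nonneg <| by
    rintro r ⟨f, -, -, rfl⟩
    exact varNorm_nonneg _
  apply le_antisymm
  · refine Real.sSup_le ?_ hN_nonneg
    rintro r ⟨f, hf, rfl⟩
    rcases (varNorm_nonneg f).eq_or_lt with hconst | hpos
    · exact ((hT.varNorm_map_le f).trans hconst.ge).trans hN_nonneg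
    obtain ⟨g, hsup, hinf, hfg⟩ := exists_normalized_of_varNorm_pos hpos
    have hg : varNorm (T g) ∈ N := ⟨g, hsup, hinf, rfl⟩
    calc varNorm (T f) = varNorm f * varNorm (T g) := by
          rw [hfg, hT.varNorm_map_smul_add_const hpos.le, ← hfg]
      _ ≤ 1 * varNorm (T g) := by
          gcongr
          · exact varNorm_nonneg _
          · exact varNorm_le_one_of_mem_Icc hf
      _ ≤ sSup N := (one_mul _).trans_le (le_csSup (hT.bddAbove_varNorm_map_Icc.mono hN) hg)
  · refine Real.sSup_le (fun r hr => le_csSup hT.bddAbove_varNorm_map_Icc (hN hr)) ?_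
    refine Real.sSup_nonneg ?_
    rintro r ⟨f, -, rfl⟩
    exact varNorm_nonneg _

theorem coeffErg_eq_sSup_centNorm (hT : IsLTO T) :
    coeffErg T =
      sSup {r | ∃ f : α → ℝ, (∀ x, -1 ≤ f x ∧ f x ≤ 1) ∧ r = centNorm (T f)} := by
  have hcent (f : α → ℝ) : centNorm (T f) = varNorm (T f) / 2 := rfl
  unfold coeffErg
  congr 1
  ext r
  constructor
  · rintro ⟨f, hf, rfl⟩
    refine ⟨(2 : ℝ) • f + fun _ => -1, fun x => ?_, ?_⟩
    · simp only [Pi.add_apply, Pi.smul_apply, smul_eq_mul]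
      constructor <;> linarith [hf x]
    · rw [hcent, hT.varNorm_map_smul_add_const zero_le_two]
      ring
  · rintro ⟨f, hf, rfl⟩
    refine ⟨(2⁻¹ : ℝ) • f + fun _ => 2⁻¹, fun x => ?_, ?_⟩
    · simp only [Pi.add_apply, Pi.smul_apply, smul_eq_mul]
      constructor <;> linarith [hf x]
    · rw [hcent, hT.varNorm_map_smul_add_const (by norm_num)]
      ring

end IsLTO

theorem stmt14 (T : (X → ℝ) → (X → ℝ)) (hT : IsLTO T) :
    coeffErg T =
      sSup {r | ∃ f : X → ℝ, (⨆ x, f x) = 1 ∧ (⨅ x, f x) = 0 ∧ r = varNorm (T f)} ∧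
    coeffErg T =
      sSup {r | ∃ f : X → ℝ, (∀ x, -1 ≤ f x ∧ f x ≤ 1) ∧ r = centNorm (T f)} :=
  ⟨hT.coeffErg_eq_sSup_normalized, hT.coeffErg_eq_sSup_centNorm⟩
end
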